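/- arXiv:1501.05197 — 2 statements merged into one kernel-verified Lean document; each statement's English description precedes it below -/
import Mathlib

section
/- Let T be a tree with no regular cores and exactly two cores u and v, both small. Every landmark set of T that is minimal with respect to set inclusion contains at most one vertex on the path between u and v (excluding u and v themselves), and at most two vertices on each long leg of u and of v. -/
open SimpleGraph

variable {V : Type*} [Fintype V] [DecidableEq V]

/-- A vertex `τ` separates `u` and `w` if its distances to them differ. -/
def Separates (T : SimpleGraph V) (τ u w : V) : Prop :=
  T.dist τ u ≠ T.dist τ w

/-- There are at least two vertices of `L` separating `u` and `w`. -/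
def HasTwoSeparators (T : SimpleGraph V) (L : Set V) (u w : V) : Prop :=
  ∃ τ₁ ∈ L, ∃ τ₂ ∈ L, τ₁ ≠ τ₂ ∧ Separates T τ₁ u w ∧ Separates T τ₂ u w

/-- `L` is a landmark set (non-landmarks model, `k = 2`): every pair of distinct
vertices outside `L` is separated by at least two vertices of `L`. -/
def IsLandmarkSet (T : SimpleGraph V) (L : Set V) : Prop :=
  ∀ u w : V, u ≠ w → u ∉ L → w ∉ L → HasTwoSeparators T L u w

/-- A core is a vertex of degree at least 3. -/
def IsCore (T : SimpleGraph V) [DecidableRel T.Adj] (v : V) : Prop :=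
  3 ≤ T.degree v

/-- The subtree of the neighbor `x` of `v`: in a tree, the connected component of `x`
obtained by removing `v`, characterized via distances (`w` is in it iff the path from
`v` to `w` passes through `x`). -/
def Branch (T : SimpleGraph V) (v x : V) : Set V :=
  {w | T.dist v w = T.dist x w + 1}

/-- The subtree of the neighbor `x` of `v` is a (standard) leg:
a path containing no cores. -/
def IsStandardLeg (T : SimpleGraph V) [DecidableRel T.Adj] (v x : V) : Prop :=
  T.Adj v x ∧ ∀ w ∈ Branch T v x, T.degree w ≤ 2

/-- A short leg consists of a single vertex. -/
def IsShortLeg (T : SimpleGraph V) [DecidableRel T.Adj] (v x : V) : Prop :=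
  IsStandardLeg T v x ∧ Branch T v x = {x}

/-- A long leg is a standard leg that is not short. -/
def IsLongLeg (T : SimpleGraph V) [DecidableRel T.Adj] (v x : V) : Prop :=
  IsStandardLeg T v x ∧ Branch T v x ≠ {x}

/-- A small core: degree exactly 3, with at least two standard legs, one of which is short. -/
def IsSmallCore (T : SimpleGraph V) [DecidableRel T.Adj] (v : V) : Prop :=
  T.degree v = 3 ∧ ∃ x y : V, x ≠ y ∧ IsShortLeg T v x ∧ IsStandardLeg T v y

/-- A regular core is a core that is not small. -/
def IsRegularCore (T : SimpleGraph V) [DecidableRel T.Adj] (v : V) : Prop :=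
  IsCore T v ∧ ¬ IsSmallCore T v

/-- A modified leg of `v`: a subtree of a neighbor of `v` containing exactly one core,
which is a small core. -/
def IsModifiedLeg (T : SimpleGraph V) [DecidableRel T.Adj] (v x : V) : Prop :=
  T.Adj v x ∧ ∃ u ∈ Branch T v x, IsSmallCore T u ∧
    ∀ w ∈ Branch T v x, IsCore T w → w = u

/-- A g-leg is a standard leg or a modified leg. -/
def IsGLeg (T : SimpleGraph V) [DecidableRel T.Adj] (v x : V) : Prop :=
  IsStandardLeg T v x ∨ IsModifiedLeg T v x

/-- A minor core: a regular core which either (i) has at most one g-leg, or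
(ii) has degree at least 4, no modified legs, exactly two standard legs one of which
is short, and every other subtree of a neighbor contains a regular core. -/
def IsMinorCore (T : SimpleGraph V) [DecidableRel T.Adj] (v : V) : Prop :=
  IsRegularCore T v ∧
  ((∀ x y : V, IsGLeg T v x → IsGLeg T v y → x = y) ∨
   (4 ≤ T.degree v ∧ (∀ x : V, ¬ IsModifiedLeg T v x) ∧
    (∃ x y : V, x ≠ y ∧ IsShortLeg T v x ∧ IsStandardLeg T v y ∧
      ∀ z : V, IsStandardLeg T v z → z = x ∨ z = y) ∧
    (∀ z : V, T.Adj v z → ¬ IsGLeg T v z → ∃ w ∈ Branch T v z, IsRegularCore T w)))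

/-- A main core is a regular core that is not minor. -/
def IsMainCore (T : SimpleGraph V) [DecidableRel T.Adj] (v : V) : Prop :=
  IsRegularCore T v ∧ ¬ IsMinorCore T v

/-- The vertices lying on g-legs of `v`. -/
def GLegVerts (T : SimpleGraph V) [DecidableRel T.Adj] (v : V) : Set V :=
  {w | ∃ x : V, IsGLeg T v x ∧ w ∈ Branch T v x}

/-- Type (s,0) solution on the leg of neighbor `x` of `v`: the empty set. -/
def SolS0 (T : SimpleGraph V) (v x : V) (S : Set V) : Prop :=
  S ∩ Branch T v x = ∅

/-- Type (s,1) solution: one vertex of the leg whose position is at least 2. -/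
def SolS1 (T : SimpleGraph V) (v x : V) (S : Set V) : Prop :=
  ∃ w : V, S ∩ Branch T v x = {w} ∧ 2 ≤ T.dist v w

/-- Type (s,2) solution: at least two vertices of the leg. -/
def SolS2 (T : SimpleGraph V) (v x : V) (S : Set V) : Prop :=
  ∃ w₁ ∈ S ∩ Branch T v x, ∃ w₂ ∈ S ∩ Branch T v x, w₁ ≠ w₂

/-- Type (s,3) solution: exactly the vertex with position 1 (that is, `x`). -/
def SolS3 (T : SimpleGraph V) (v x : V) (S : Set V) : Prop :=
  S ∩ Branch T v x = {x}

/-- For a modified leg `x` of `v`: `u` is its small core (at position `T.dist v u`),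
and `a`, `b` are the two vertices at position `T.dist v u + 1`, where `b` is the
vertex of a short leg of `u` (the vertex `ℓ^b`) and `a` is the other one (`ℓ^a`). -/
def MLegPair (T : SimpleGraph V) [DecidableRel T.Adj] (v x u a b : V) : Prop :=
  u ∈ Branch T v x ∧ IsSmallCore T u ∧ a ≠ b ∧
  a ∈ Branch T v x ∧ b ∈ Branch T v x ∧
  T.dist v a = T.dist v u + 1 ∧ T.dist v b = T.dist v u + 1 ∧
  IsShortLeg T u b

/-- Type (m,1) solution on the modified leg `x` of `v`: either `{ℓ^a}` or `{ℓ^b}`. -/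
def SolM1 (T : SimpleGraph V) [DecidableRel T.Adj] (v x : V) (S : Set V) : Prop :=
  ∃ u a b : V, MLegPair T v x u a b ∧
    (S ∩ Branch T v x = {a} ∨ S ∩ Branch T v x = {b})

/-- Type (m,2) solution: contains neither `ℓ^a` nor `ℓ^b`, contains at least two
vertices of positions at least `i + 2`, and no vertex of position `i + 1`. -/
def SolM2 (T : SimpleGraph V) [DecidableRel T.Adj] (v x : V) (S : Set V) : Prop :=
  ∃ u a b : V, MLegPair T v x u a b ∧ a ∉ S ∧ b ∉ S ∧
    (∃ w₁ ∈ S ∩ Branch T v x, ∃ w₂ ∈ S ∩ Branch T v x, w₁ ≠ w₂ ∧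
      T.dist v u + 2 ≤ T.dist v w₁ ∧ T.dist v u + 2 ≤ T.dist v w₂) ∧
    ∀ w ∈ S ∩ Branch T v x, T.dist v w ≠ T.dist v u + 1

/-- Type (m,3) solution: at least two vertices, one of which is `ℓ^a` or `ℓ^b`. -/
def SolM3 (T : SimpleGraph V) [DecidableRel T.Adj] (v x : V) (S : Set V) : Prop :=
  ∃ u a b : V, MLegPair T v x u a b ∧
    (∃ w₁ ∈ S ∩ Branch T v x, ∃ w₂ ∈ S ∩ Branch T v x, w₁ ≠ w₂) ∧
    (a ∈ S ∨ b ∈ S)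

/-- `S` is a local set for the core `v`. -/
def IsLocalSet (T : SimpleGraph V) [DecidableRel T.Adj] (v : V) (S : Set V) : Prop :=
  S ⊆ GLegVerts T v ∧
  -- (1) at most one standard leg has a type (s,0) solution, and every standard leg
  -- has a solution of one of the types (s,0), (s,1), (s,2), (s,3)
  (∀ x y : V, IsStandardLeg T v x → IsStandardLeg T v y → x ≠ y →
    SolS0 T v x S → SolS0 T v y S → False) ∧
  (∀ x : V, IsStandardLeg T v x →
    SolS0 T v x S ∨ SolS1 T v x S ∨ SolS2 T v x S ∨ SolS3 T v x S) ∧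
  -- (2) every modified leg has a solution of type (m,1), (m,2) or (m,3)
  (∀ x : V, IsModifiedLeg T v x →
    SolM1 T v x S ∨ SolM2 T v x S ∨ SolM3 T v x S) ∧
  -- (3) if some standard leg has a type (s,0) solution, no modified leg has type (m,1)
  ((∃ x : V, IsStandardLeg T v x ∧ SolS0 T v x S) →
    ∀ y : V, IsModifiedLeg T v y → ¬ SolM1 T v y S) ∧
  -- (4) if some long leg has a type (s,0) solution, every other long leg has type (s,2)
  (∀ x : V, IsLongLeg T v x → SolS0 T v x S →
    ∀ y : V, IsLongLeg T v y → y ≠ x → SolS2 T v y S) ∧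
  -- (5) if some short leg has a type (s,0) solution, every long leg has type (s,2) or (s,3)
  ((∃ x : V, IsShortLeg T v x ∧ SolS0 T v x S) →
    ∀ y : V, IsLongLeg T v y → SolS2 T v y S ∨ SolS3 T v y S)

/-- A local set is thrifty if its solutions of types (s,2), (m,2) and (m,3)
consist of exactly two vertices each. -/
def IsThrifty (T : SimpleGraph V) [DecidableRel T.Adj] (v : V) (S : Set V) : Prop :=
  (∀ x : V, IsStandardLeg T v x → SolS2 T v x S → (S ∩ Branch T v x).ncard = 2) ∧
  (∀ x : V, IsModifiedLeg T v x → (SolM2 T v x S ∨ SolM3 T v x S) →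
    (S ∩ Branch T v x).ncard = 2)

/-!
Both bounds are proved by deleting one landmark from `L` and checking that the rest is still a
landmark set. Since the vertices strictly inside the `u`–`v` path have degree 2, every vertex
lies on that path or beyond one of its ends, and distances add up along such configurations: a
landmark on the path (or on a standard leg) sees a vertex through its position, and a landmark
beyond `u` sees everything beyond `v` through `u` and `v`. Each small core has two legs off the
path whose first vertices must be told apart, which forces landmarks `α` beyond `u` and `β`
beyond `v`.

If `a ≠ b` in `L` lie strictly inside the path, any two vertices outside `L \ {b}` are separated
by two of `a`, `α`, `β`, unless they lie beyond the same end at the same distance from it, and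
then `b` does not separate them either. Likewise, if `c₁, c₂, c₃` in `L` lie on a standard leg,
`c₁`, `c₂` and a landmark off the leg take over the role of `c₃`.
-/

namespace SimpleGraph

section Metric

omit [Fintype V] [DecidableEq V]

variable {T : SimpleGraph V} {a b c p u v w x y y' z : V}

def Between (T : SimpleGraph V) (a b c : V) : Prop :=
  T.dist a b + T.dist b c = T.dist a c

lemma Between.symm (h : Between T a b c) : Between T c b a := by
  simpa only [Between, dist_comm, add_comm] using h

lemma between_self_left : Between T a a b := by
  simp [Between]

lemma between_self_right : Between T a b b := by
  simp [Between]

lemma Adj.mem_branch_self (h : T.Adj u x) : x ∈ Branch T u x := by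
  simp [Branch, dist_eq_one_iff_adj.mpr h]

lemma self_notMem_branch : u ∉ Branch T u x := by
  simp [Branch]

lemma pos_dist_of_mem_branch (hw : w ∈ Branch T u x) : 0 < T.dist u w := by
  change T.dist u w = T.dist x w + 1 at hw
  omega

lemma Connected.between_mono_right (hT : T.Connected) (h : Between T a b c)
    (hx : Between T b x c) : Between T a b x := by
  unfold Between at *
  have := hT.dist_triangle (u := a) (v := x) (w := c)
  have := hT.dist_triangle (u := a) (v := b) (w := x)
  omega

lemma Connected.dist_eq_add_of_between (hT : T.Connected) (hx : Between T u x v)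
    (hy : Between T v u y) : T.dist x y = T.dist u x + T.dist u y := by
  have h := hT.between_mono_right hy.symm hx
  have : T.dist y u = T.dist u y := dist_comm
  have : T.dist y x = T.dist x y := dist_comm
  unfold Between at h
  omega

lemma Connected.eq_of_between_of_between (hT : T.Connected) (hw : Between T u w v)
    (hw' : Between T v u w) : w = u := by
  have : T.dist v u = T.dist u v := dist_comm
  have : T.dist w v = T.dist v w := dist_comm
  unfold Between at *
  exact (hT.dist_eq_zero_iff.1 (by omega)).symm

lemma Connected.ne_of_between_of_between (hT : T.Connected) (hb : Between T u b v)
    (hw : Between T v u w) (hwu : w ≠ u) : w ≠ b :=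
  fun hwb => hwu (hT.eq_of_between_of_between (hwb ▸ hb) hw)

lemma Walk.dist_add_dist_le_length (q : T.Walk a b) (hz : z ∈ q.support) :
    T.dist a z + T.dist z b ≤ q.length := by
  classical
  conv_rhs => rw [← q.take_spec hz, Walk.length_append]
  exact add_le_add (dist_le _) (dist_le _)

lemma Connected.exists_adj_dist_eq_add_one (hT : T.Connected) (h : x ≠ z) :
    ∃ y, T.Adj x y ∧ T.dist z x = T.dist z y + 1 := by
  obtain ⟨p, hp⟩ := hT.exists_walk_length_eq_dist x z
  cases p with
  | nil => exact absurd rfl h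
  | @cons _ y _ hadj q =>
    refine ⟨y, hadj, ?_⟩
    have := dist_le q
    have := hT.dist_triangle (u := x) (v := y) (w := z)
    rw [Walk.length_cons] at hp
    rw [dist_comm (u := z), dist_comm (u := z), dist_eq_one_iff_adj.mpr hadj] at *
    omega

namespace IsTree

lemma eq_of_adj_of_dist_eq_add_one (hT : T.IsTree) (hy : T.Adj x y) (hy' : T.Adj x y')
    (h : T.dist z x = T.dist z y + 1) (h' : T.dist z x = T.dist z y' + 1) : y = y' := by
  obtain ⟨p, hp⟩ := hT.connected.exists_walk_length_eq_dist y z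
  obtain ⟨p', hp'⟩ := hT.connected.exists_walk_length_eq_dist y' z
  rw [dist_comm] at h h' hp hp'
  have hpath : (Walk.cons hy p).IsPath := Walk.isPath_of_length_eq_dist _ <| by
    rw [Walk.length_cons, hp, ← h]
  have hpath' : (Walk.cons hy' p').IsPath := Walk.isPath_of_length_eq_dist _ <| by
    rw [Walk.length_cons, hp', ← h']
  simpa using congrArg Walk.snd ((hT.existsUnique_path x z).unique hpath hpath')

lemma mem_branch_or (hT : T.IsTree) (hux : T.Adj u x) (w : V) :
    w ∈ Branch T u x ∨ T.dist x w = T.dist u w + 1 := by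
  have := hT.dist_eq_dist_add_one_of_adj w hux
  rwa [dist_comm (u := w), dist_comm (u := w)] at this

lemma eq_of_adj_of_notMem_branch (hT : T.IsTree) (hux : T.Adj u x) (hzz' : T.Adj z z')
    (hz : z ∉ Branch T u x) (hz' : z' ∈ Branch T u x) : z = u := by
  by_contra hzu
  have hk : 0 < T.dist u z := hT.connected.pos_dist_of_ne (Ne.symm hzu)
  have hxz := (hT.mem_branch_or hux z).resolve_left hz
  have hz'u := hT.dist_eq_dist_add_one_of_adj u hzz'
  have hz'x := hT.dist_eq_dist_add_one_of_adj x hzz'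
  have hz'' : T.dist u z' = T.dist x z' + 1 := hz'
  have hz'x' : T.dist x z' = T.dist u z := by omega
  obtain ⟨y, hz'y, hy⟩ := hT.connected.exists_adj_dist_eq_add_one (x := z') (z := x)
    (by rintro rfl; rw [dist_self] at hz'x'; omega)
  have hyu := hT.dist_eq_dist_add_one_of_adj u hz'y
  have := hT.connected.dist_triangle (u := u) (v := x) (w := y)
  rw [dist_eq_one_iff_adj.mpr hux] at this
  have hyz : y = z := hT.eq_of_adj_of_dist_eq_add_one hz'y hzz'.symm (z := u)
    (by omega) (by omega)
  subst hyz
  omega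

lemma between_of_mem_branch (hT : T.IsTree) (hux : T.Adj u x) (hw : w ∈ Branch T u x)
    (hp : p ∉ Branch T u x) : Between T p u w := by
  obtain ⟨q, hq⟩ := hT.connected.exists_walk_length_eq_dist p w
  obtain ⟨d, hd, hd₁, hd₂⟩ := q.exists_boundary_dart (Branch T u x)ᶜ hp (by simpa using hw)
  have hdu : d.fst = u := hT.eq_of_adj_of_notMem_branch hux d.adj hd₁ (by simpa using hd₂)
  have := q.dist_add_dist_le_length (hdu ▸ q.dart_fst_mem_support_of_mem_darts hd)
  have := hT.connected.dist_triangle (u := p) (v := u) (w := w)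
  unfold Between
  omega

lemma dist_eq_add_of_mem_branch (hT : T.IsTree) (hux : T.Adj u x) (hc : c ∈ Branch T u x)
    (hw : w ∉ Branch T u x) : T.dist c w = T.dist u c + T.dist u w := by
  have := hT.between_of_mem_branch hux hc hw
  have : T.dist w u = T.dist u w := dist_comm
  have : T.dist w c = T.dist c w := dist_comm
  unfold Between at *
  omega

lemma notMem_branch_of_between (hT : T.IsTree) (huv : u ≠ v) (hux : T.Adj u x)
    (hv : v ∉ Branch T u x) (hw : Between T u v w) : w ∉ Branch T u x := fun h => by
  have := hT.between_of_mem_branch hux h hv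
  have := hT.connected.pos_dist_of_ne huv
  have : T.dist v u = T.dist u v := dist_comm
  unfold Between at *
  omega

lemma dist_eq_of_between (hT : T.IsTree) (hx : Between T u x v) (hy : Between T u y v) :
    T.dist u x + T.dist x y = T.dist u y ∨ T.dist u y + T.dist x y = T.dist u x := by
  classical
  obtain ⟨g₁, hg₁⟩ := hT.connected.exists_walk_length_eq_dist u x
  obtain ⟨g₂, hg₂⟩ := hT.connected.exists_walk_length_eq_dist x v
  obtain ⟨h₁, hh₁⟩ := hT.connected.exists_walk_length_eq_dist u y
  obtain ⟨h₂, hh₂⟩ := hT.connected.exists_walk_length_eq_dist y v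
  have hg : (g₁.append g₂).IsPath :=
    Walk.isPath_of_length_eq_dist _ (by rw [Walk.length_append, hg₁, hg₂]; exact hx)
  have hh : (h₁.append h₂).IsPath :=
    Walk.isPath_of_length_eq_dist _ (by rw [Walk.length_append, hh₁, hh₂]; exact hy)
  have hmem : y ∈ (g₁.append g₂).support := by
    rw [(hT.existsUnique_path u v).unique hg hh]
    exact (Walk.mem_support_append_iff _ _).2 (Or.inl h₁.end_mem_support)
  have hyx : T.dist y x = T.dist x y := dist_comm
  unfold Between at hx hy
  rcases (Walk.mem_support_append_iff _ _).1 hmem with h | h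
  · have := g₁.dist_add_dist_le_length h
    have := hT.connected.dist_triangle (u := u) (v := y) (w := x)
    omega
  · have := g₂.dist_add_dist_le_length h
    have := hT.connected.dist_triangle (u := u) (v := x) (w := y)
    omega

lemma eq_of_between_of_dist_eq (hT : T.IsTree) (hx : Between T u x v) (hy : Between T u y v)
    (h : T.dist u x = T.dist u y) : x = y := by
  have := hT.dist_eq_of_between hx hy
  exact hT.connected.dist_eq_zero_iff.1 (by omega)

lemma between_of_between_of_between (hT : T.IsTree) (huv : u ≠ v) (hw : Between T w u v)
    (hz : Between T u v z) : Between T w u z := by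
  by_cases hwu : w = u
  · subst hwu
    exact between_self_left
  obtain ⟨n, hun, hn⟩ := hT.connected.exists_adj_dist_eq_add_one (Ne.symm hwu)
  have hwn : w ∈ Branch T u n := by
    change T.dist u w = T.dist n w + 1
    rwa [dist_comm, dist_comm (u := n)]
  have hvn : v ∉ Branch T u n := by
    intro (h : T.dist u v = T.dist n v + 1)
    have := hT.connected.dist_triangle (u := w) (v := n) (w := v)
    unfold Between at hw
    omega
  have hzn : z ∉ Branch T u n := by
    intro h
    have hvz := hT.between_of_mem_branch hun h hvn
    have := hT.connected.pos_dist_of_ne huv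
    have : T.dist v u = T.dist u v := dist_comm
    unfold Between at hvz hz
    omega
  exact (hT.between_of_mem_branch hun hwn hzn).symm

lemma between_or_between_of_adj (hT : T.IsTree) (hxy : T.Adj x y) (hx : Between T v u x) :
    Between T v u y ∨ Between T u y v := by
  have hv := hT.dist_eq_dist_add_one_of_adj v hxy
  have hu := hT.dist_eq_dist_add_one_of_adj u hxy
  have := hT.connected.dist_triangle (u := v) (v := u) (w := y)
  have : T.dist y v = T.dist v y := dist_comm
  have : T.dist u v = T.dist v u := dist_comm
  unfold Between at *
  by_cases hxu : x = u
  · subst hxu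
    rw [dist_self] at hu
    omega
  obtain ⟨z, hxz, hz⟩ := hT.connected.exists_adj_dist_eq_add_one hxu
  have := hT.dist_eq_dist_add_one_of_adj v hxz
  have := hT.connected.dist_triangle (u := v) (v := u) (w := z)
  rcases hv with hv | hv
  · rcases hu with hu | hu
    · omega
    · have hyz : y = z := hT.eq_of_adj_of_dist_eq_add_one hxy hxz hv (by omega)
      subst hyz
      omega
  · omega

end IsTree

end Metric

section Degree

omit [DecidableEq V]

variable {T : SimpleGraph V} [DecidableRel T.Adj] {a b c u v w x y : V}

lemma three_le_degree (ha : T.Adj x a) (hb : T.Adj x b) (hc : T.Adj x c)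
    (hab : a ≠ b) (hac : a ≠ c) (hbc : b ≠ c) : 3 ≤ T.degree x := by
  classical
  rw [← card_neighborFinset_eq_degree, ← Finset.card_eq_three.mpr ⟨a, b, c, hab, hac, hbc, rfl⟩]
  refine Finset.card_le_card fun w hw => ?_
  simp only [Finset.mem_insert, Finset.mem_singleton] at hw
  rcases hw with rfl | rfl | rfl <;> simpa

namespace IsTree

lemma between_of_adj_of_degree_le_two (hT : T.IsTree) (hx : Between T u x v) (hxu : x ≠ u)
    (hxv : x ≠ v) (hdeg : T.degree x ≤ 2) (hxy : T.Adj x y) : Between T u y v := by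
  obtain ⟨z₁, hxz₁, hz₁⟩ := hT.connected.exists_adj_dist_eq_add_one hxu
  obtain ⟨z₂, hxz₂, hz₂⟩ := hT.connected.exists_adj_dist_eq_add_one hxv
  have h₁ := hT.connected.dist_triangle (u := z₁) (v := x) (w := v)
  have h₂ := hT.connected.dist_triangle (u := u) (v := x) (w := z₂)
  have := hT.connected.dist_triangle (u := u) (v := z₁) (w := v)
  have := hT.connected.dist_triangle (u := u) (v := z₂) (w := v)
  rw [dist_eq_one_iff_adj.mpr hxz₁.symm] at h₁
  rw [dist_eq_one_iff_adj.mpr hxz₂] at h₂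
  have : T.dist x v = T.dist v x := dist_comm
  have : T.dist z₂ v = T.dist v z₂ := dist_comm
  unfold Between at *
  by_contra hy
  have h₁₂ : z₁ ≠ z₂ := by rintro rfl; omega
  have := three_le_degree hxy hxz₁ hxz₂ (by rintro rfl; omega) (by rintro rfl; omega) h₁₂
  omega

lemma between_or_between_or_between (hT : T.IsTree)
    (hdeg : ∀ w, Between T u w v → w ≠ u → w ≠ v → T.degree w ≤ 2) (w : V) :
    Between T u w v ∨ Between T v u w ∨ Between T u v w := by
  have hstep : ∀ x y, T.Adj x y → Between T u x v ∨ Between T v u x ∨ Between T u v x →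
      Between T u y v ∨ Between T v u y ∨ Between T u v y := by
    intro x y hxy hx
    rcases hx with hx | hx | hx
    · by_cases hxu : x = u
      · subst hxu
        exact (hT.between_or_between_of_adj hxy between_self_right).elim
          (Or.inr ∘ Or.inl) Or.inl
      by_cases hxv : x = v
      · subst hxv
        exact (hT.between_or_between_of_adj hxy between_self_right).elim
          (Or.inr ∘ Or.inr) (Or.inl ∘ Between.symm)
      exact Or.inl (hT.between_of_adj_of_degree_le_two hx hxu hxv (hdeg x hx hxu hxv) hxy)
    · exact (hT.between_or_between_of_adj hxy hx).elim (Or.inr ∘ Or.inl) Or.inl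
    · exact (hT.between_or_between_of_adj hxy hx).elim (Or.inr ∘ Or.inr) (Or.inl ∘ Between.symm)
  have hwalk : ∀ {x} (q : T.Walk x w), (Between T u x v ∨ Between T v u x ∨ Between T u v x) →
      Between T u w v ∨ Between T v u w ∨ Between T u v w := by
    intro x q
    induction q with
    | nil => exact id
    | cons h q ih => exact fun hx => ih (hstep _ _ h hx)
  exact hwalk (hT.connected.preconnected u w).some (Or.inl between_self_left)

lemma exists_forall_between_of_isStandardLeg (hT : T.IsTree) (hleg : IsStandardLeg T u x) :
    ∃ e, ∀ w ∈ Branch T u x, Between T u w e := by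
  have hx : x ∈ Branch T u x := hleg.1.mem_branch_self
  obtain ⟨e, he, hmax⟩ := (Branch T u x).exists_max_image (T.dist u) (Set.toFinite _) ⟨x, hx⟩
  have hdeg : ∀ w, Between T u w e → w ≠ u → w ≠ e → T.degree w ≤ 2 := by
    refine fun w hw hwu _ => hleg.2 w (by_contra fun hwx => ?_)
    have := hT.between_of_mem_branch hleg.1 he hwx
    have := hT.connected.pos_dist_of_ne (Ne.symm hwu)
    have : T.dist w u = T.dist u w := dist_comm
    unfold Between at *
    omega
  refine ⟨e, fun w hw => ?_⟩
  have := pos_dist_of_mem_branch hw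
  have := hmax w hw
  have hw' : T.dist u w = T.dist x w + 1 := hw
  have he' : T.dist u e = T.dist x e + 1 := he
  have := hT.connected.dist_triangle (u := e) (v := x) (w := w)
  have : T.dist e x = T.dist x e := dist_comm
  have : T.dist e u = T.dist u e := dist_comm
  have : T.dist e w = T.dist w e := dist_comm
  rcases hT.between_or_between_or_between hdeg w with h | h | h <;> unfold Between at * <;> omega

lemma dist_eq_of_mem_standardLeg (hT : T.IsTree) (hleg : IsStandardLeg T u x)
    (hc : c ∈ Branch T u x) (hw : w ∈ Branch T u x) :
    T.dist u c + T.dist c w = T.dist u w ∨ T.dist u w + T.dist c w = T.dist u c := by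
  obtain ⟨e, he⟩ := hT.exists_forall_between_of_isStandardLeg hleg
  exact hT.dist_eq_of_between (he c hc) (he w hw)

lemma eq_of_mem_standardLeg_of_dist_eq (hT : T.IsTree) (hleg : IsStandardLeg T u x)
    (hc : c ∈ Branch T u x) (hw : w ∈ Branch T u x) (h : T.dist u c = T.dist u w) : c = w := by
  obtain ⟨e, he⟩ := hT.exists_forall_between_of_isStandardLeg hleg
  exact hT.eq_of_between_of_dist_eq (he c hc) (he w hw) h

end IsTree

end Degree

end SimpleGraph

section Landmarks

omit [Fintype V] [DecidableEq V]

variable {T : SimpleGraph V} {L S : Set V} {c n n' s t u τ₁ τ₂ τ₃ : V}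

lemma HasTwoSeparators.symm (h : HasTwoSeparators T S s t) : HasTwoSeparators T S t s := by
  obtain ⟨τ₁, h₁, τ₂, h₂, hne, hs₁, hs₂⟩ := h
  exact ⟨τ₁, h₁, τ₂, h₂, hne, Ne.symm hs₁, Ne.symm hs₂⟩

lemma HasTwoSeparators.of_three (h₁ : τ₁ ∈ S) (h₂ : τ₂ ∈ S) (h₃ : τ₃ ∈ S) (h₁₂ : τ₁ ≠ τ₂)
    (h₁₃ : τ₁ ≠ τ₃) (h₂₃ : τ₂ ≠ τ₃)
    (h : Separates T τ₁ s t ∧ Separates T τ₂ s t ∨ Separates T τ₁ s t ∧ Separates T τ₃ s t ∨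
      Separates T τ₂ s t ∧ Separates T τ₃ s t) :
    HasTwoSeparators T S s t := by
  rcases h with ⟨hs, ht⟩ | ⟨hs, ht⟩ | ⟨hs, ht⟩
  exacts [⟨τ₁, h₁, τ₂, h₂, h₁₂, hs, ht⟩, ⟨τ₁, h₁, τ₃, h₃, h₁₃, hs, ht⟩,
    ⟨τ₂, h₂, τ₃, h₃, h₂₃, hs, ht⟩]

lemma IsLandmarkSet.hasTwoSeparators_diff_singleton (hL : IsLandmarkSet T L) (hst : s ≠ t)
    (hs : s ∉ L) (ht : t ∉ L) (hc : ¬ Separates T c s t) :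
    HasTwoSeparators T (L \ {c}) s t := by
  obtain ⟨τ₁, h₁, τ₂, h₂, hne, hs₁, hs₂⟩ := hL s t hst hs ht
  exact ⟨τ₁, ⟨h₁, fun h => hc (h ▸ hs₁)⟩, τ₂, ⟨h₂, fun h => hc (h ▸ hs₂)⟩, hne, hs₁, hs₂⟩

lemma IsLandmarkSet.exists_mem_branch (hT : T.IsTree) (hL : IsLandmarkSet T L)
    (hn : T.Adj u n) (hn' : T.Adj u n') (hnn' : n ≠ n') :
    ∃ γ ∈ L, γ ∈ Branch T u n ∨ γ ∈ Branch T u n' := by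
  by_cases h : n ∈ L
  · exact ⟨n, h, Or.inl hn.mem_branch_self⟩
  by_cases h' : n' ∈ L
  · exact ⟨n', h', Or.inr hn'.mem_branch_self⟩
  obtain ⟨τ, hτ, -, -, -, hsep, -⟩ := hL n n' hnn' h h'
  refine ⟨τ, hτ, by_contra fun hout => hsep ?_⟩
  rw [not_or] at hout
  have := (hT.mem_branch_or hn τ).resolve_left hout.1
  have := (hT.mem_branch_or hn' τ).resolve_left hout.2
  rw [dist_comm, dist_comm (u := τ)]
  omega

end Landmarks

section Legs

omit [DecidableEq V]

variable {T : SimpleGraph V} [DecidableRel T.Adj] {L S : Set V} {c₁ c₂ c₃ γ s t u v x : V}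

lemma IsStandardLeg.notMem_branch (hleg : IsStandardLeg T u x) (hv : 2 < T.degree v) :
    v ∉ Branch T u x :=
  fun h => (hleg.2 v h).not_gt hv

lemma IsSmallCore.exists_mem_between (hT : T.IsTree) (hu : IsSmallCore T u)
    (hv : 2 < T.degree v) (hL : IsLandmarkSet T L) : ∃ α ∈ L, α ≠ u ∧ Between T v u α := by
  obtain ⟨-, x, y, hxy, hx, hy⟩ := hu
  obtain ⟨α, hα, hαx | hαy⟩ := hL.exists_mem_branch hT hx.1.1 hy.1 hxy
  · exact ⟨α, hα, fun h => self_notMem_branch (h ▸ hαx),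
      hT.between_of_mem_branch hx.1.1 hαx (hx.1.notMem_branch hv)⟩
  · exact ⟨α, hα, fun h => self_notMem_branch (h ▸ hαy),
      hT.between_of_mem_branch hy.1 hαy (hy.notMem_branch hv)⟩

lemma HasTwoSeparators.of_mem_standardLeg (hT : T.IsTree) (hleg : IsStandardLeg T u x)
    (h₁ : c₁ ∈ S) (h₂ : c₂ ∈ S) (hγ : γ ∈ S) (hc₁ : c₁ ∈ Branch T u x) (hc₂ : c₂ ∈ Branch T u x)
    (hγx : γ ∉ Branch T u x) (h₁₂ : c₁ ≠ c₂) (hs : s ∈ Branch T u x) (hst : s ≠ t) :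
    HasTwoSeparators T S s t := by
  have h₁₂' : T.dist u c₁ ≠ T.dist u c₂ :=
    fun h => h₁₂ (hT.eq_of_mem_standardLeg_of_dist_eq hleg hc₁ hc₂ h)
  have := hT.dist_eq_of_mem_standardLeg hleg hc₁ hs
  have := hT.dist_eq_of_mem_standardLeg hleg hc₂ hs
  have hγs : Between T γ u s := hT.between_of_mem_branch hleg.1 hs hγx
  have := pos_dist_of_mem_branch hs
  have := pos_dist_of_mem_branch hc₁
  have := pos_dist_of_mem_branch hc₂
  refine .of_three h₁ h₂ hγ h₁₂ (fun h => hγx (h ▸ hc₁)) (fun h => hγx (h ▸ hc₂)) ?_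
  unfold Separates
  by_cases ht : t ∈ Branch T u x
  · have := hT.dist_eq_of_mem_standardLeg hleg hc₁ ht
    have := hT.dist_eq_of_mem_standardLeg hleg hc₂ ht
    have hγt : Between T γ u t := hT.between_of_mem_branch hleg.1 ht hγx
    have : T.dist u s ≠ T.dist u t :=
      fun h => hst (hT.eq_of_mem_standardLeg_of_dist_eq hleg hs ht h)
    unfold Between at hγs hγt
    omega
  · have := hT.dist_eq_add_of_mem_branch hleg.1 hc₁ ht
    have := hT.dist_eq_add_of_mem_branch hleg.1 hc₂ ht
    have := hT.connected.dist_triangle (u := γ) (v := u) (w := t)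
    unfold Between at hγs
    omega

theorem IsLandmarkSet.diff_singleton_of_mem_standardLeg (hT : T.IsTree)
    (hleg : IsStandardLeg T u x) (hL : IsLandmarkSet T L) (hγ : γ ∈ L) (hγx : γ ∉ Branch T u x)
    (h₁ : c₁ ∈ L ∩ Branch T u x) (h₂ : c₂ ∈ L ∩ Branch T u x) (h₃ : c₃ ∈ L ∩ Branch T u x)
    (h₁₂ : c₁ ≠ c₂) (h₁₃ : c₁ ≠ c₃) (h₂₃ : c₂ ≠ c₃) : IsLandmarkSet T (L \ {c₃}) := by
  have hc₁ : c₁ ∈ L \ {c₃} := ⟨h₁.1, h₁₃⟩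
  have hc₂ : c₂ ∈ L \ {c₃} := ⟨h₂.1, h₂₃⟩
  have hγ' : γ ∈ L \ {c₃} := ⟨hγ, fun h => hγx (h ▸ h₃.2)⟩
  intro s t hst hs ht
  by_cases hsx : s ∈ Branch T u x
  · exact .of_mem_standardLeg hT hleg hc₁ hc₂ hγ' h₁.2 h₂.2 hγx h₁₂ hsx hst
  by_cases htx : t ∈ Branch T u x
  · exact (HasTwoSeparators.of_mem_standardLeg hT hleg hc₁ hc₂ hγ' h₁.2 h₂.2 hγx h₁₂ htx
      hst.symm).symm
  have := hT.dist_eq_add_of_mem_branch hleg.1 h₁.2 hsx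
  have := hT.dist_eq_add_of_mem_branch hleg.1 h₁.2 htx
  have := hT.dist_eq_add_of_mem_branch hleg.1 h₂.2 hsx
  have := hT.dist_eq_add_of_mem_branch hleg.1 h₂.2 htx
  by_cases hd : T.dist u s = T.dist u t
  · have := hT.dist_eq_add_of_mem_branch hleg.1 h₃.2 hsx
    have := hT.dist_eq_add_of_mem_branch hleg.1 h₃.2 htx
    exact hL.hasTwoSeparators_diff_singleton hst (fun h => hs ⟨h, fun h' => hsx (h' ▸ h₃.2)⟩)
      (fun h => ht ⟨h, fun h' => htx (h' ▸ h₃.2)⟩) (by unfold Separates; omega)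
  · exact ⟨c₁, hc₁, c₂, hc₂, h₁₂, by unfold Separates; omega, by unfold Separates; omega⟩

theorem IsLandmarkSet.ncard_inter_branch_le_two (hT : T.IsTree) (hleg : IsStandardLeg T u x)
    (hL : IsLandmarkSet T L) (hmin : ∀ L' : Set V, L' ⊂ L → ¬ IsLandmarkSet T L')
    (hγ : γ ∈ L) (hγx : γ ∉ Branch T u x) : (L ∩ Branch T u x).ncard ≤ 2 := by
  by_contra! h
  obtain ⟨c₁, c₂, c₃, h₁, h₂, h₃, h₁₂, h₁₃, h₂₃⟩ := (Set.two_lt_ncard_iff (Set.toFinite _)).1 h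
  exact hmin _ (Set.sdiff_singleton_ssubset.2 h₃.1)
    (hL.diff_singleton_of_mem_standardLeg hT hleg hγ hγx h₁ h₂ h₃ h₁₂ h₁₃ h₂₃)

end Legs

section Path

omit [Fintype V] [DecidableEq V]

variable {T : SimpleGraph V} {L S : Set V} {u v α β a b x y : V}

-- `Between T v u w` reads: `w` lies beyond `u` as seen from `v`.
structure PathGuards (T : SimpleGraph V) (S : Set V) (u v α β a : V) : Prop where
  ne : u ≠ v
  mem_α : α ∈ S
  mem_β : β ∈ S
  mem_a : a ∈ S
  α_ne : α ≠ u
  β_ne : β ≠ v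
  a_ne_u : a ≠ u
  a_ne_v : a ≠ v
  between_α : Between T v u α
  between_β : Between T u v β
  between_a : Between T u a v

namespace PathGuards

lemma symm (C : PathGuards T S u v α β a) : PathGuards T S v u β α a :=
  ⟨C.ne.symm, C.mem_β, C.mem_α, C.mem_a, C.β_ne, C.α_ne, C.a_ne_v, C.a_ne_u, C.between_β,
    C.between_α, C.between_a.symm⟩

lemma dist_α_of_between (C : PathGuards T S u v α β a) (hT : T.IsTree) (hx : Between T u x v) :
    T.dist α x = T.dist α u + T.dist u x := by
  have := hT.connected.between_mono_right C.between_α.symm hx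
  unfold Between at this
  omega

lemma dist_α_of_beyond (C : PathGuards T S u v α β a) (hT : T.IsTree) (hy : Between T u v y) :
    T.dist α y = T.dist α u + T.dist u v + T.dist v y := by
  have := hT.between_of_between_of_between C.ne C.between_α.symm hy
  unfold Between at *
  omega

lemma dist_a (C : PathGuards T S u v α β a) (hT : T.IsTree) :
    0 < T.dist u a ∧ 0 < T.dist v a ∧ T.dist u a + T.dist v a = T.dist u v := by
  have := C.between_a
  have : T.dist a v = T.dist v a := dist_comm
  unfold Between at *
  exact ⟨hT.connected.pos_dist_of_ne C.a_ne_u.symm, hT.connected.pos_dist_of_ne C.a_ne_v.symm,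
    by omega⟩

lemma α_ne_β (C : PathGuards T S u v α β a) (hT : T.IsTree) : α ≠ β := by
  rintro rfl
  have := C.between_α
  have := C.between_β
  have := hT.connected.pos_dist_of_ne C.ne
  have : T.dist v u = T.dist u v := dist_comm
  unfold Between at *
  omega

lemma a_ne_α (C : PathGuards T S u v α β a) (hT : T.IsTree) : a ≠ α := by
  rintro rfl
  have := C.between_α
  have := C.dist_a hT
  have : T.dist v u = T.dist u v := dist_comm
  unfold Between at *
  omega

lemma hasTwoSeparators_of_between (C : PathGuards T S u v α β a) (hT : T.IsTree)
    (hx : Between T u x v) (hy : Between T u y v) (hxy : x ≠ y) : HasTwoSeparators T S x y := by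
  have := C.dist_α_of_between hT hx; have := C.dist_α_of_between hT hy
  have := C.symm.dist_α_of_between hT hx.symm; have := C.symm.dist_α_of_between hT hy.symm
  have : T.dist u x ≠ T.dist u y := fun h => hxy (hT.eq_of_between_of_dist_eq hx hy h)
  have : T.dist x v = T.dist v x := dist_comm
  have : T.dist y v = T.dist v y := dist_comm
  unfold Between at hx hy
  exact ⟨α, C.mem_α, β, C.mem_β, C.α_ne_β hT, by unfold Separates; omega,
    by unfold Separates; omega⟩

lemma hasTwoSeparators_of_between_of_beyond (C : PathGuards T S u v α β a) (hT : T.IsTree)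
    (hx : Between T u x v) (hy : Between T v u y) (hyu : y ≠ u) : HasTwoSeparators T S x y := by
  have := hT.connected.dist_eq_add_of_between C.between_a hy
  have := hT.dist_eq_of_between C.between_a hx
  have := C.dist_α_of_between hT hx
  have := hT.connected.dist_triangle (u := α) (v := u) (w := y)
  have := C.symm.dist_α_of_between hT hx.symm; have := C.symm.dist_α_of_beyond hT hy
  have := C.dist_a hT
  have := hT.connected.pos_dist_of_ne hyu.symm
  have : T.dist x v = T.dist v x := dist_comm
  have : T.dist v u = T.dist u v := dist_comm
  unfold Between at hx hy
  exact .of_three C.mem_a C.mem_α C.mem_β (C.a_ne_α hT) (C.symm.a_ne_α hT)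
    (C.α_ne_β hT) (by unfold Separates; omega)

lemma hasTwoSeparators_of_beyond_of_dist_ne (C : PathGuards T S u v α β a) (hT : T.IsTree)
    (hx : Between T v u x) (hy : Between T v u y) (hxy : T.dist u x ≠ T.dist u y) :
    HasTwoSeparators T S x y := by
  have := hT.connected.dist_eq_add_of_between C.between_a hx
  have := hT.connected.dist_eq_add_of_between C.between_a hy
  have := C.symm.dist_α_of_beyond hT hx; have := C.symm.dist_α_of_beyond hT hy
  exact ⟨a, C.mem_a, β, C.mem_β, C.symm.a_ne_α hT, by unfold Separates; omega,
    by unfold Separates; omega⟩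

lemma hasTwoSeparators_of_beyond_of_beyond (C : PathGuards T S u v α β a) (hT : T.IsTree)
    (hx : Between T v u x) (hxu : x ≠ u) (hy : Between T u v y) (hyv : y ≠ v) :
    HasTwoSeparators T S x y := by
  have := hT.connected.dist_eq_add_of_between C.between_a hx
  have := hT.connected.dist_eq_add_of_between C.symm.between_a hy
  have := C.dist_α_of_beyond hT hy; have := C.symm.dist_α_of_beyond hT hx
  have := hT.connected.dist_triangle (u := α) (v := u) (w := x)
  have := hT.connected.dist_triangle (u := β) (v := v) (w := y)
  have := C.dist_a hT
  have := hT.connected.pos_dist_of_ne hxu.symm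
  have := hT.connected.pos_dist_of_ne hyv.symm
  have : T.dist v u = T.dist u v := dist_comm
  exact .of_three C.mem_a C.mem_α C.mem_β (C.a_ne_α hT) (C.symm.a_ne_α hT)
    (C.α_ne_β hT) (by unfold Separates; omega)

lemma hasTwoSeparators_diff_of_beyond (C : PathGuards T (L \ {b}) u v α β a) (hT : T.IsTree)
    (hL : IsLandmarkSet T L) (hb : Between T u b v) (hx : Between T v u x) (hxu : x ≠ u)
    (hy : Between T v u y) (hyu : y ≠ u) (hxy : x ≠ y) (hxL : x ∉ L \ {b})
    (hyL : y ∉ L \ {b}) : HasTwoSeparators T (L \ {b}) x y := by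
  by_cases hd : T.dist u x = T.dist u y
  · have := hT.connected.dist_eq_add_of_between hb hx
    have := hT.connected.dist_eq_add_of_between hb hy
    exact hL.hasTwoSeparators_diff_singleton hxy
      (fun h => hxL ⟨h, hT.connected.ne_of_between_of_between hb hx hxu⟩)
      (fun h => hyL ⟨h, hT.connected.ne_of_between_of_between hb hy hyu⟩)
      (by unfold Separates; omega)
  · exact C.hasTwoSeparators_of_beyond_of_dist_ne hT hx hy hd

end PathGuards

theorem IsLandmarkSet.diff_singleton_of_between (hT : T.IsTree)
    (hcover : ∀ w, Between T u w v ∨ Between T v u w ∨ Between T u v w) (hL : IsLandmarkSet T L)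
    (C : PathGuards T (L \ {b}) u v α β a) (hb : Between T u b v) :
    IsLandmarkSet T (L \ {b}) := by
  have hzone : ∀ w, Between T u w v ∨ (Between T v u w ∧ w ≠ u) ∨ (Between T u v w ∧ w ≠ v) := by
    intro w
    by_cases hwu : w = u
    · exact Or.inl (hwu ▸ between_self_left)
    by_cases hwv : w = v
    · exact Or.inl (hwv ▸ between_self_right)
    rcases hcover w with h | h | h
    exacts [Or.inl h, Or.inr (Or.inl ⟨h, hwu⟩), Or.inr (Or.inr ⟨h, hwv⟩)]
  intro x y hxy hx hy
  rcases hzone x with hx' | ⟨hx', hxu⟩ | ⟨hx', hxv⟩ <;>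
    rcases hzone y with hy' | ⟨hy', hyu⟩ | ⟨hy', hyv⟩
  · exact C.hasTwoSeparators_of_between hT hx' hy' hxy
  · exact C.hasTwoSeparators_of_between_of_beyond hT hx' hy' hyu
  · exact C.symm.hasTwoSeparators_of_between_of_beyond hT hx'.symm hy' hyv
  · exact (C.hasTwoSeparators_of_between_of_beyond hT hy' hx' hxu).symm
  · exact C.hasTwoSeparators_diff_of_beyond hT hL hb hx' hxu hy' hyu hxy hx hy
  · exact C.hasTwoSeparators_of_beyond_of_beyond hT hx' hxu hy' hyv
  · exact (C.symm.hasTwoSeparators_of_between_of_beyond hT hy'.symm hx' hxv).symm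
  · exact C.symm.hasTwoSeparators_of_beyond_of_beyond hT hx' hxv hy' hyu
  · exact C.symm.hasTwoSeparators_diff_of_beyond hT hL hb.symm hx' hxv hy' hyv hxy hx hy

end Path

/-- a tree with no regular cores and exactly two (small) cores `u` and
`v`; every landmark set that is minimal with respect to set inclusion contains at most
one vertex on the path between `u` and `v` (excluding `u` and `v`), and at most two
vertices on each long leg of `u` and of `v`. -/
theorem two_small_cores_minimal_landmark_structure
    (T : SimpleGraph V) [DecidableRel T.Adj] (hT : T.IsTree)
    (u v : V) (huv : u ≠ v)
    (hu : IsSmallCore T u) (hv : IsSmallCore T v)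
    (huniq : ∀ w : V, IsCore T w → w = u ∨ w = v)
    (L : Set V) (hL : IsLandmarkSet T L)
    (hmin : ∀ L' : Set V, L' ⊂ L → ¬ IsLandmarkSet T L') :
    (∀ a ∈ L, ∀ b ∈ L,
      (a ≠ u ∧ a ≠ v ∧ T.dist u a + T.dist a v = T.dist u v) →
      (b ≠ u ∧ b ≠ v ∧ T.dist u b + T.dist b v = T.dist u v) → a = b) ∧
    (∀ x : V, IsLongLeg T u x → (L ∩ Branch T u x).ncard ≤ 2) ∧
    (∀ x : V, IsLongLeg T v x → (L ∩ Branch T v x).ncard ≤ 2) := by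
  have hdu : 2 < T.degree u := by rw [hu.1]; omega
  have hdv : 2 < T.degree v := by rw [hv.1]; omega
  obtain ⟨α, hαL, hαu, hα⟩ := hu.exists_mem_between hT hdv hL
  obtain ⟨β, hβL, hβv, hβ⟩ := hv.exists_mem_between hT hdu hL
  have hcover := hT.between_or_between_or_between (u := u) (v := v)
    fun w _ hwu hwv => not_lt.1 fun h => (huniq w h).elim hwu hwv
  refine ⟨fun a ha b hb ⟨hau, hav, ha'⟩ ⟨_, _, hb'⟩ => ?_, fun x hx => ?_, fun x hx => ?_⟩
  · by_contra hab
    have hb'' : Between T u b v := hb'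
    have hαb := hT.connected.ne_of_between_of_between hb'' hα hαu
    have hβb := hT.connected.ne_of_between_of_between hb''.symm hβ hβv
    exact hmin _ (Set.sdiff_singleton_ssubset.2 hb) (hL.diff_singleton_of_between hT hcover
      ⟨huv, ⟨hαL, hαb⟩, ⟨hβL, hβb⟩, ⟨ha, hab⟩, hαu, hβv, hau, hav, hα, hβ, ha'⟩ hb'')
  · exact hL.ncard_inter_branch_le_two hT hx.1 hmin hβL
      (hT.notMem_branch_of_between huv hx.1.1 (hx.1.notMem_branch hdv) hβ)
  · exact hL.ncard_inter_branch_le_two hT hx.1 hmin hαL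
      (hT.notMem_branch_of_between huv.symm hx.1.1 (hx.1.notMem_branch hdu) hα)
end

section
/- Let T be a tree with exactly one core u, which is a small core (so T has no regular cores), and let L' be a landmark set of T such that the subset of vertices of L' lying on the standard legs of u is a local set for u that is not thrifty. Then L' is not minimal with respect to set inclusion, i.e., some proper subset of L' is also a landmark set of T. -/
open SimpleGraph

variable {V : Type*} [Fintype V] [DecidableEq V]

set_option linter.unusedSectionVars false

namespace Aux

variable {G : SimpleGraph V}

lemma tdist_eq_zero (hT : G.IsTree) {a b : V} : G.dist a b = 0 ↔ a = b :=
  hT.isConnected.dist_eq_zero_iff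

lemma tri (hT : G.IsTree) (a b c : V) : G.dist a c ≤ G.dist a b + G.dist b c :=
  hT.isConnected.dist_triangle

lemma dist_split (hT : G.IsTree) {a c : V} (p : G.Walk a c) (hp : p.length = G.dist a c)
    {b : V} (hb : b ∈ p.support) : G.dist a b + G.dist b c = G.dist a c := by
  have h1 := SimpleGraph.dist_le (p.takeUntil b hb)
  have h2 := SimpleGraph.dist_le (p.dropUntil b hb)
  have h3 : (p.takeUntil b hb).length + (p.dropUntil b hb).length = p.length := by
    rw [← SimpleGraph.Walk.length_append, SimpleGraph.Walk.take_spec]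
  have h4 := tri hT a b c
  omega

lemma adj_dist_ne (hT : G.IsTree) {a b : V} (hab : G.Adj a b) (τ : V) :
    G.dist τ a ≠ G.dist τ b := by
  intro h
  obtain ⟨p, hp, hpl⟩ := hT.isConnected.exists_path_of_dist τ a
  obtain ⟨r, hr, hrl⟩ := hT.isConnected.exists_path_of_dist τ b
  have hbns : b ∉ p.support := by
    intro hbs
    have hsplit := dist_split hT p hpl hbs
    have hba : G.dist b a ≠ 0 := fun e => hab.ne' ((tdist_eq_zero hT).mp e)
    omega
  have hbns' : b ∉ p.reverse.support := by
    rw [SimpleGraph.Walk.support_reverse, List.mem_reverse]; exact hbns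
  have hq : (SimpleGraph.Walk.cons hab.symm p.reverse).IsPath := hp.reverse.cons hbns'
  have hr' : r.reverse.IsPath := hr.reverse
  obtain ⟨P, -, huniq⟩ := hT.existsUnique_path b τ
  have e1 := huniq _ hq
  have e2 := huniq _ hr'
  have := congrArg SimpleGraph.Walk.length (e1.trans e2.symm)
  simp only [SimpleGraph.Walk.length_cons, SimpleGraph.Walk.length_reverse] at this
  omega

lemma adj_dist_cases (hT : G.IsTree) {a b : V} (hab : G.Adj a b) (τ : V) :
    G.dist τ b = G.dist τ a + 1 ∨ G.dist τ a = G.dist τ b + 1 := by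
  have h1 := tri hT τ a b
  have h2 := tri hT τ b a
  have h3 : G.dist a b = 1 := SimpleGraph.dist_eq_one_iff_adj.mpr hab
  have h4 : G.dist b a = 1 := SimpleGraph.dist_eq_one_iff_adj.mpr hab.symm
  have h5 := adj_dist_ne hT hab τ
  omega

lemma no_two_down (hT : G.IsTree) {m a z₁ z₂ : V} (h1 : G.Adj m z₁) (h2 : G.Adj m z₂)
    (hne : z₁ ≠ z₂) (d1 : G.dist a z₁ + 1 = G.dist a m) (d2 : G.dist a z₂ + 1 = G.dist a m) :
    False := by
  obtain ⟨p₁, hp₁, hl₁⟩ := hT.isConnected.exists_path_of_dist a z₁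
  obtain ⟨p₂, hp₂, hl₂⟩ := hT.isConnected.exists_path_of_dist a z₂
  have hm₁ : m ∉ p₁.support := by
    intro hm
    have hsplit := dist_split hT p₁ hl₁ hm
    omega
  have hm₂ : m ∉ p₂.support := by
    intro hm
    have hsplit := dist_split hT p₂ hl₂ hm
    omega
  have hm₁' : m ∉ p₁.reverse.support := by
    rw [SimpleGraph.Walk.support_reverse, List.mem_reverse]; exact hm₁
  have hm₂' : m ∉ p₂.reverse.support := by
    rw [SimpleGraph.Walk.support_reverse, List.mem_reverse]; exact hm₂
  have hq₁ : (SimpleGraph.Walk.cons h1 p₁.reverse).IsPath := hp₁.reverse.cons hm₁'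
  have hq₂ : (SimpleGraph.Walk.cons h2 p₂.reverse).IsPath := hp₂.reverse.cons hm₂'
  obtain ⟨P, -, huniq⟩ := hT.existsUnique_path m a
  have e := (huniq _ hq₁).trans (huniq _ hq₂).symm
  have hz₂mem : z₂ ∈ (SimpleGraph.Walk.cons h2 p₂.reverse).support := by
    rw [SimpleGraph.Walk.support_cons]
    exact List.mem_cons_of_mem _ p₂.reverse.start_mem_support
  rw [← e, SimpleGraph.Walk.support_cons] at hz₂mem
  rcases List.mem_cons.mp hz₂mem with h | h
  · exact h2.ne h.symm
  · rw [SimpleGraph.Walk.support_reverse, List.mem_reverse] at h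
    have hsplit := dist_split hT p₁ hl₁ h
    have : G.dist z₂ z₁ = 0 := by omega
    exact hne (((tdist_eq_zero hT).mp this)).symm

lemma exists_toward (hT : G.IsTree) {m y : V} (h : G.dist m y ≠ 0) :
    ∃ z, G.Adj m z ∧ G.dist z y + 1 = G.dist m y := by
  obtain ⟨p, hl⟩ := SimpleGraph.exists_walk_of_dist_ne_zero h
  cases p with
  | nil => rw [SimpleGraph.dist_self] at h; exact absurd rfl h
  | @cons _ z _ hadj p' =>
    refine ⟨z, hadj, ?_⟩
    have h1 := SimpleGraph.dist_le p'
    have h2 := tri hT m z y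
    have h3 : G.dist m z = 1 := SimpleGraph.dist_eq_one_iff_adj.mpr hadj
    rw [SimpleGraph.Walk.length_cons] at hl
    omega

end Aux

namespace Aux

variable {G : SimpleGraph V}

lemma mem_branch {u x a : V} : a ∈ Branch G u x ↔ G.dist u a = G.dist x a + 1 := Iff.rfl

lemma branch_ne {u x a : V} (h : a ∈ Branch G u x) : a ≠ u := by
  intro h'
  subst h'
  rw [mem_branch, SimpleGraph.dist_self] at h
  omega

lemma dist_u_pos {u x a : V} (h : a ∈ Branch G u x) : 1 ≤ G.dist u a := by
  rw [mem_branch] at h; omega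

lemma exists_branch (hT : G.IsTree) {u a : V} (ha : a ≠ u) :
    ∃ x, G.Adj u x ∧ a ∈ Branch G u x := by
  have h0 : G.dist u a ≠ 0 := fun h => ha ((tdist_eq_zero hT).mp h).symm
  obtain ⟨z, hz, hd⟩ := exists_toward hT h0
  exact ⟨z, hz, by rw [mem_branch]; omega⟩

lemma branch_unique (hT : G.IsTree) {u x y a : V} (hx : G.Adj u x) (hy : G.Adj u y)
    (hax : a ∈ Branch G u x) (hay : a ∈ Branch G u y) : x = y := by
  by_contra hne
  rw [mem_branch] at hax hay
  have c1 : G.dist a x = G.dist x a := SimpleGraph.dist_comm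
  have c2 : G.dist a y = G.dist y a := SimpleGraph.dist_comm
  have c3 : G.dist a u = G.dist u a := SimpleGraph.dist_comm
  exact no_two_down hT (a := a) hx hy hne (by omega) (by omega)

lemma down (hT : G.IsTree) {u x v v' : V} (hx : G.Adj u x) (hv : v ∈ Branch G u x)
    (h2 : 2 ≤ G.dist u v) (hadj : G.Adj v v') (hd : G.dist u v' + 1 = G.dist u v) :
    v' ∈ Branch G u x := by
  rw [mem_branch] at hv ⊢
  have hvx0 : G.dist v x ≠ 0 := by
    rw [show G.dist v x = G.dist x v from SimpleGraph.dist_comm]; omega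
  obtain ⟨z, hz, hdz⟩ := exists_toward hT hvx0
  have hu1 : G.dist u x = 1 := SimpleGraph.dist_eq_one_iff_adj.mpr hx
  have ht1 := tri hT u x z
  have ht2 := tri hT u z v
  have hzv : G.dist z v = 1 := SimpleGraph.dist_eq_one_iff_adj.mpr hz.symm
  have hcomm : G.dist z x = G.dist x z := SimpleGraph.dist_comm
  have hcomm2 : G.dist v x = G.dist x v := SimpleGraph.dist_comm
  have hzu : G.dist u z + 1 = G.dist u v := by omega
  have hzeq : z = v' := by
    by_contra hne
    have c1 : G.dist u z = G.dist z u := SimpleGraph.dist_comm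
    have c2 : G.dist u v' = G.dist v' u := SimpleGraph.dist_comm
    have c3 : G.dist u v = G.dist v u := SimpleGraph.dist_comm
    exact no_two_down hT (a := u) hz hadj hne (by omega) (by omega)
  subst hzeq
  omega

lemma nbr (hT : G.IsTree) {u x v z : V} (hx : G.Adj u x) (hv : v ∈ Branch G u x)
    (hadj : G.Adj v z) (hz : z ≠ u) : z ∈ Branch G u x := by
  rcases adj_dist_cases hT hadj u with hc | hc
  · rw [mem_branch] at hv ⊢
    have h1 := tri hT x v z
    have h2 := tri hT u x z
    have hu1 : G.dist u x = 1 := SimpleGraph.dist_eq_one_iff_adj.mpr hx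
    have hvz : G.dist v z = 1 := SimpleGraph.dist_eq_one_iff_adj.mpr hadj
    omega
  · have hn : 2 ≤ G.dist u v := by
      have := dist_u_pos hv
      rcases Nat.lt_or_ge (G.dist u v) 2 with h | h
      · exfalso
        have : G.dist u z = 0 := by omega
        exact hz ((tdist_eq_zero hT).mp this).symm
      · exact h
    exact down hT hx hv hn hadj (by omega)

lemma walk_through (hT : G.IsTree) {u x : V} (hx : G.Adj u x) :
    ∀ {v b : V} (p : G.Walk v b), v ∈ Branch G u x → b ∉ Branch G u x → u ∈ p.support := by
  intro v b p
  induction p with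
  | nil => exact fun hv hb => absurd hv hb
  | @cons v' z _ h q ih =>
    intro hv hb
    rw [SimpleGraph.Walk.support_cons]
    by_cases hzu : z = u
    · subst hzu
      exact List.mem_cons_of_mem _ q.start_mem_support
    · exact List.mem_cons_of_mem _ (ih (nbr hT hx hv h hzu) hb)

lemma dist_cross (hT : G.IsTree) {u x v b : V} (hx : G.Adj u x) (hv : v ∈ Branch G u x)
    (hb : b ∉ Branch G u x) : G.dist v b = G.dist u v + G.dist u b := by
  by_cases hbu : b = u
  · have hc : G.dist v u = G.dist u v := SimpleGraph.dist_comm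
    have hs : G.dist u u = 0 := SimpleGraph.dist_self
    rw [hbu]; omega
  · obtain ⟨p, hp, hl⟩ := hT.isConnected.exists_path_of_dist v b
    have hu := walk_through hT hx p hv hb
    have := dist_split hT p hl hu
    have hc : G.dist v u = G.dist u v := SimpleGraph.dist_comm
    omega

end Aux

namespace Aux

variable {G : SimpleGraph V} [DecidableRel G.Adj]

lemma branch_inj (hT : G.IsTree) {u : V} (huniq : ∀ w, 3 ≤ G.degree w → w = u) {x : V}
    (hx : G.Adj u x) : ∀ (n : ℕ) {v w : V}, v ∈ Branch G u x → w ∈ Branch G u x →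
    G.dist u v = n → G.dist u w = n → v = w := by
  intro n
  induction n with
  | zero =>
    intro v w hv _ hdv _
    exact absurd ((tdist_eq_zero hT).mp hdv).symm (branch_ne hv)
  | succ n ih =>
    intro v w hv hw hdv hdw
    by_cases hn : n = 0
    · subst hn
      have hv' := hv; have hw' := hw
      rw [mem_branch] at hv' hw'
      have hvx : v = x := ((tdist_eq_zero hT).mp (by omega) : x = v).symm
      have hwx : w = x := ((tdist_eq_zero hT).mp (by omega) : x = w).symm
      rw [hvx, hwx]
    · -- n ≥ 1
      have hvu : G.dist v u ≠ 0 := by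
        rw [show G.dist v u = G.dist u v from SimpleGraph.dist_comm]; omega
      have hwu : G.dist w u ≠ 0 := by
        rw [show G.dist w u = G.dist u w from SimpleGraph.dist_comm]; omega
      obtain ⟨v', hv'adj, hv'd⟩ := exists_toward hT hvu
      obtain ⟨w', hw'adj, hw'd⟩ := exists_toward hT hwu
      have cv : G.dist v' u = G.dist u v' := SimpleGraph.dist_comm
      have cw : G.dist w' u = G.dist u w' := SimpleGraph.dist_comm
      have cv2 : G.dist v u = G.dist u v := SimpleGraph.dist_comm
      have cw2 : G.dist w u = G.dist u w := SimpleGraph.dist_comm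
      have hv'b := down hT hx hv (by omega) hv'adj (by omega)
      have hw'b := down hT hx hw (by omega) hw'adj (by omega)
      have hvw' : v' = w' := ih hv'b hw'b (by omega) (by omega)
      subst hvw'
      by_contra hvw
      have hz_ne_u : v' ≠ u := branch_ne hv'b
      have hv'u : G.dist v' u ≠ 0 := by omega
      obtain ⟨z', hz'adj, hz'd⟩ := exists_toward hT hv'u
      have cz : G.dist z' u = G.dist u z' := SimpleGraph.dist_comm
      have hdvz : v ≠ z' := by intro e; rw [← e] at hz'd; omega
      have hdwz : w ≠ z' := by intro e; rw [← e] at hz'd; omega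
      have hsub : ({v, w, z'} : Finset V) ⊆ G.neighborFinset v' := by
        intro t ht
        rw [SimpleGraph.mem_neighborFinset]
        rcases Finset.mem_insert.mp ht with rfl | ht
        · exact hv'adj.symm
        · rcases Finset.mem_insert.mp ht with rfl | ht
          · exact hw'adj.symm
          · rw [Finset.mem_singleton] at ht; subst ht; exact hz'adj
      have hcard : ({v, w, z'} : Finset V).card = 3 :=
        Finset.card_eq_three.mpr ⟨v, w, z', hvw, hdvz, hdwz, rfl⟩
      have hdeg : 3 ≤ G.degree v' := by
        rw [← SimpleGraph.card_neighborFinset_eq_degree, ← hcard]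
        exact Finset.card_le_card hsub
      exact hz_ne_u (huniq v' hdeg)

lemma branch_inj' (hT : G.IsTree) {u : V} (huniq : ∀ w, 3 ≤ G.degree w → w = u) {x : V}
    (hx : G.Adj u x) {v w : V} (hv : v ∈ Branch G u x) (hw : w ∈ Branch G u x)
    (h : G.dist u v = G.dist u w) : v = w :=
  branch_inj hT huniq hx (G.dist u w) hv hw h rfl

lemma dist_same (hT : G.IsTree) {u : V} (huniq : ∀ w, 3 ≤ G.degree w → w = u) {x : V}
    (hx : G.Adj u x) : ∀ (k : ℕ) {v w : V}, v ∈ Branch G u x → w ∈ Branch G u x →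
    G.dist u v = G.dist u w + k → G.dist v w = k := by
  intro k
  induction k with
  | zero =>
    intro v w hv hw hd
    rw [branch_inj' hT huniq hx hv hw (by omega), SimpleGraph.dist_self]
  | succ k ih =>
    intro v w hv hw hd
    have hwpos := dist_u_pos hw
    have hvu : G.dist v u ≠ 0 := by
      rw [show G.dist v u = G.dist u v from SimpleGraph.dist_comm]; omega
    obtain ⟨v', hv'adj, hv'd⟩ := exists_toward hT hvu
    have cv : G.dist v' u = G.dist u v' := SimpleGraph.dist_comm
    have cv2 : G.dist v u = G.dist u v := SimpleGraph.dist_comm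
    have hv'b := down hT hx hv (by omega) hv'adj (by omega)
    have ihh := ih hv'b hw (by omega)
    have h1 := tri hT v v' w
    have h2 := tri hT u w v
    have h3 : G.dist v v' = 1 := SimpleGraph.dist_eq_one_iff_adj.mpr hv'adj
    have h4 : G.dist w v = G.dist v w := SimpleGraph.dist_comm
    omega

lemma dist_same_abs (hT : G.IsTree) {u : V} (huniq : ∀ w, 3 ≤ G.degree w → w = u) {x : V}
    (hx : G.Adj u x) {v w : V} (hv : v ∈ Branch G u x) (hw : w ∈ Branch G u x) :
    G.dist v w = (G.dist u v - G.dist u w) + (G.dist u w - G.dist u v) := by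
  rcases le_total (G.dist u w) (G.dist u v) with h | h
  · have := dist_same hT huniq hx (G.dist u v - G.dist u w) hv hw (by omega)
    omega
  · have := dist_same hT huniq hx (G.dist u w - G.dist u v) hw hv (by omega)
    have hc : G.dist w v = G.dist v w := SimpleGraph.dist_comm
    omega

lemma dist_cross' (hT : G.IsTree) {u x t c : V} (hx : G.Adj u x) (ht : t ∈ Branch G u x)
    (hc : c ∉ Branch G u x) : G.dist t c = G.dist u t + G.dist u c := by
  have h := dist_cross hT hx ht hc
  omega

end Aux

namespace Aux

variable {G : SimpleGraph V} [DecidableRel G.Adj]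

lemma key (hT : G.IsTree) {u : V} (huniq : ∀ w, 3 ≤ G.degree w → w = u) {x r : V}
    (hx : G.Adj u x) (hr : G.Adj u r) (hxr : x ≠ r)
    {t1 t2 t3 ρ : V} (h1 : t1 ∈ Branch G u x) (h2 : t2 ∈ Branch G u x)
    (h3 : t3 ∈ Branch G u x) (hρ : ρ ∈ Branch G u r)
    (o1 : G.dist u t1 < G.dist u t2) (o2 : G.dist u t2 < G.dist u t3)
    {a b : V} (hab : a ≠ b) (hm : G.dist t2 a ≠ G.dist t2 b) :
    (G.dist t1 a ≠ G.dist t1 b ∧ G.dist t3 a ≠ G.dist t3 b) ∨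
    (G.dist t1 a ≠ G.dist t1 b ∧ G.dist ρ a ≠ G.dist ρ b) ∨
    (G.dist t3 a ≠ G.dist t3 b ∧ G.dist ρ a ≠ G.dist ρ b) := by
  have hq1 := dist_u_pos h1
  have hs1 := dist_u_pos hρ
  have loc : ∀ c, (c ∈ Branch G u x ∧ c ∉ Branch G u r) ∨
      (c ∉ Branch G u x ∧ c ∈ Branch G u r) ∨
      (c ∉ Branch G u x ∧ c ∉ Branch G u r) := by
    intro c
    by_cases hcx : c ∈ Branch G u x
    · exact Or.inl ⟨hcx, fun hcr => hxr (branch_unique hT hx hr hcx hcr)⟩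
    · by_cases hcr : c ∈ Branch G u r
      · exact Or.inr (Or.inl ⟨hcx, hcr⟩)
      · exact Or.inr (Or.inr ⟨hcx, hcr⟩)
  rcases loc a with ⟨hax, har⟩ | ⟨hax, har⟩ | ⟨hax, har⟩ <;>
    rcases loc b with ⟨hbx, hbr⟩ | ⟨hbx, hbr⟩ | ⟨hbx, hbr⟩
  · -- a ∈ X, b ∈ X
    have hne : G.dist u a ≠ G.dist u b := fun h => hab (branch_inj' hT huniq hx hax hbx h)
    have e1a := dist_same_abs hT huniq hx h1 hax
    have e1b := dist_same_abs hT huniq hx h1 hbx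
    have e3a := dist_same_abs hT huniq hx h3 hax
    have e3b := dist_same_abs hT huniq hx h3 hbx
    have e4a := dist_cross' hT hr hρ har
    have e4b := dist_cross' hT hr hρ hbr
    omega
  · -- a ∈ X, b ∈ R
    have hpa := dist_u_pos hax
    have hpb := dist_u_pos hbr
    have e1a := dist_same_abs hT huniq hx h1 hax
    have e1b := dist_cross' hT hx h1 hbx
    have e3a := dist_same_abs hT huniq hx h3 hax
    have e3b := dist_cross' hT hx h3 hbx
    have e4a := dist_cross' hT hr hρ har
    have e4b := dist_same_abs hT huniq hr hρ hbr
    omega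
  · -- a ∈ X, b ∈ O
    have hpa := dist_u_pos hax
    have e1a := dist_same_abs hT huniq hx h1 hax
    have e1b := dist_cross' hT hx h1 hbx
    have e3a := dist_same_abs hT huniq hx h3 hax
    have e3b := dist_cross' hT hx h3 hbx
    have e4a := dist_cross' hT hr hρ har
    have e4b := dist_cross' hT hr hρ hbr
    omega
  · -- a ∈ R, b ∈ X
    have hpa := dist_u_pos har
    have hpb := dist_u_pos hbx
    have e1a := dist_cross' hT hx h1 hax
    have e1b := dist_same_abs hT huniq hx h1 hbx
    have e3a := dist_cross' hT hx h3 hax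
    have e3b := dist_same_abs hT huniq hx h3 hbx
    have e4a := dist_same_abs hT huniq hr hρ har
    have e4b := dist_cross' hT hr hρ hbr
    omega
  · -- a ∈ R, b ∈ R
    have hne : G.dist u a ≠ G.dist u b := fun h => hab (branch_inj' hT huniq hr har hbr h)
    have e1a := dist_cross' hT hx h1 hax
    have e1b := dist_cross' hT hx h1 hbx
    have e3a := dist_cross' hT hx h3 hax
    have e3b := dist_cross' hT hx h3 hbx
    omega
  · -- a ∈ R, b ∈ O
    have e2a := dist_cross' hT hx h2 hax
    have e2b := dist_cross' hT hx h2 hbx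
    have e1a := dist_cross' hT hx h1 hax
    have e1b := dist_cross' hT hx h1 hbx
    have e3a := dist_cross' hT hx h3 hax
    have e3b := dist_cross' hT hx h3 hbx
    omega
  · -- a ∈ O, b ∈ X
    have hpa := dist_u_pos hbx
    have e1a := dist_cross' hT hx h1 hax
    have e1b := dist_same_abs hT huniq hx h1 hbx
    have e3a := dist_cross' hT hx h3 hax
    have e3b := dist_same_abs hT huniq hx h3 hbx
    have e4a := dist_cross' hT hr hρ har
    have e4b := dist_cross' hT hr hρ hbr
    omega
  · -- a ∈ O, b ∈ R
    have e2a := dist_cross' hT hx h2 hax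
    have e2b := dist_cross' hT hx h2 hbx
    have e1a := dist_cross' hT hx h1 hax
    have e1b := dist_cross' hT hx h1 hbx
    have e3a := dist_cross' hT hx h3 hax
    have e3b := dist_cross' hT hx h3 hbx
    omega
  · -- a ∈ O, b ∈ O
    have e2a := dist_cross' hT hx h2 hax
    have e2b := dist_cross' hT hx h2 hbx
    have e1a := dist_cross' hT hx h1 hax
    have e1b := dist_cross' hT hx h1 hbx
    have e3a := dist_cross' hT hx h3 hax
    have e3b := dist_cross' hT hx h3 hbx
    omega

lemma order3 {α : Type*} (P : α → Prop) (f : α → ℕ) {a b c : α}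
    (ha : P a) (hb : P b) (hc : P c)
    (hab : f a ≠ f b) (hac : f a ≠ f c) (hbc : f b ≠ f c) :
    ∃ p q r, P p ∧ P q ∧ P r ∧ f p < f q ∧ f q < f r := by
  rcases lt_trichotomy (f a) (f b) with h1 | h1 | h1
  · rcases lt_trichotomy (f b) (f c) with h2 | h2 | h2
    · exact ⟨a, b, c, ha, hb, hc, h1, h2⟩
    · exact absurd h2 hbc
    · rcases lt_trichotomy (f a) (f c) with h3 | h3 | h3
      · exact ⟨a, c, b, ha, hc, hb, h3, h2⟩
      · exact absurd h3 hac
      · exact ⟨c, a, b, hc, ha, hb, h3, h1⟩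
  · exact absurd h1 hab
  · rcases lt_trichotomy (f a) (f c) with h3 | h3 | h3
    · exact ⟨b, a, c, hb, ha, hc, h1, h3⟩
    · exact absurd h3 hac
    · rcases lt_trichotomy (f b) (f c) with h2 | h2 | h2
      · exact ⟨b, c, a, hb, hc, ha, h2, h3⟩
      · exact absurd h2 hbc
      · exact ⟨c, b, a, hc, hb, ha, h2, h1⟩

end Aux


/-- a tree whose only core `u` is a small core; if the restriction of a
landmark set `L'` to the standard legs of `u` is a local set that is not thrifty, then
`L'` is not minimal with respect to set inclusion. -/

theorem single_small_core_non_thrifty_not_minimal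
    (T : SimpleGraph V) [DecidableRel T.Adj] (hT : T.IsTree)
    (u : V) (hu : IsSmallCore T u) (huniq : ∀ w : V, IsCore T w → w = u)
    (L' : Set V) (hL' : IsLandmarkSet T L')
    (hls : IsLocalSet T u
      (L' ∩ {w : V | ∃ x : V, IsStandardLeg T u x ∧ w ∈ Branch T u x}))
    (hnt : ¬ IsThrifty T u
      (L' ∩ {w : V | ∃ x : V, IsStandardLeg T u x ∧ w ∈ Branch T u x})) :
    ∃ L'' : Set V, L'' ⊂ L' ∧ IsLandmarkSet T L'' := by
  classical
  set S : Set V := L' ∩ {w : V | ∃ x : V, IsStandardLeg T u x ∧ w ∈ Branch T u x} with hSdef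
  have hconn := hT.isConnected
  have huniq' : ∀ w, 3 ≤ T.degree w → w = u := fun w h => huniq w h
  have hstd : ∀ y, T.Adj u y → IsStandardLeg T u y := by
    intro y hy
    refine ⟨hy, fun w hw => ?_⟩
    by_contra hdeg
    exact Aux.branch_ne hw (huniq' w (by omega))
  have hnomod : ∀ y, ¬ IsModifiedLeg T u y := by
    rintro y ⟨hyadj, u', hu'mem, hu'sc, -⟩
    exact Aux.branch_ne hu'mem (huniq u' hu'sc.1.ge)
  have hfail : ¬ ∀ z, IsStandardLeg T u z → SolS2 T u z S → (S ∩ Branch T u z).ncard = 2 := by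
    intro h
    exact hnt ⟨h, fun z hz _ => absurd hz (hnomod z)⟩
  push_neg at hfail
  obtain ⟨x, hxleg, hxs2, hxcard⟩ := hfail
  have hadjx : T.Adj u x := hxleg.1
  obtain ⟨w₁, hw₁, w₂, hw₂, hw12⟩ := hxs2
  have hthird : ∃ w₃ ∈ S ∩ Branch T u x, w₃ ≠ w₁ ∧ w₃ ≠ w₂ := by
    by_contra hcon
    push_neg at hcon
    apply hxcard
    have hset : S ∩ Branch T u x = {w₁, w₂} := by
      apply Set.Subset.antisymm
      · intro w hw
        rcases eq_or_ne w w₁ with rfl | h1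
        · exact Set.mem_insert _ _
        · exact Set.mem_insert_iff.mpr (Or.inr (hcon w hw h1))
      · intro w hw
        rcases hw with rfl | hw
        · exact hw₁
        · rcases hw with rfl
          exact hw₂
    rw [hset]
    exact Set.ncard_pair hw12
  obtain ⟨w₃, hw₃, h31, h32⟩ := hthird
  have hinj : ∀ v w, v ∈ Branch T u x → w ∈ Branch T u x →
      T.dist u v = T.dist u w → v = w :=
    fun v w hv hw h => Aux.branch_inj' hT huniq' hadjx hv hw h
  obtain ⟨t1, t2, t3, ht1, ht2, ht3, o1, o2⟩ :=
    Aux.order3 (· ∈ S ∩ Branch T u x) (T.dist u) hw₁ hw₂ hw₃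
      (fun h => hw12 (hinj _ _ hw₁.2 hw₂.2 h))
      (fun h => h31 (hinj _ _ hw₁.2 hw₃.2 h).symm)
      (fun h => h32 (hinj _ _ hw₂.2 hw₃.2 h).symm)
  have hdeg3 : T.degree u = 3 := hu.1
  have hxmem : x ∈ T.neighborFinset u := by
    rw [SimpleGraph.mem_neighborFinset]; exact hadjx
  have hcard2 : ((T.neighborFinset u).erase x).card = 2 := by
    rw [Finset.card_erase_of_mem hxmem, SimpleGraph.card_neighborFinset_eq_degree, hdeg3]
  obtain ⟨y, z, hyz, hset2⟩ := Finset.card_eq_two.mp hcard2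
  have hy : y ∈ (T.neighborFinset u).erase x := by rw [hset2]; exact Finset.mem_insert_self _ _
  have hz : z ∈ (T.neighborFinset u).erase x := by rw [hset2]; simp
  have hyx : y ≠ x := (Finset.mem_erase.mp hy).1
  have hzx : z ≠ x := (Finset.mem_erase.mp hz).1
  have hyadj : T.Adj u y := by
    have h' := (Finset.mem_erase.mp hy).2
    rwa [SimpleGraph.mem_neighborFinset] at h'
  have hzadj : T.Adj u z := by
    have h' := (Finset.mem_erase.mp hz).2
    rwa [SimpleGraph.mem_neighborFinset] at h'
  have hne_empty : (S ∩ Branch T u y).Nonempty ∨ (S ∩ Branch T u z).Nonempty := by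
    by_contra hcon
    push_neg at hcon
    exact hls.2.1 y z (hstd y hyadj) (hstd z hzadj) hyz hcon.1 hcon.2
  obtain ⟨r, hradj, hrx, ρ, hρS, hρbr⟩ :
      ∃ r, T.Adj u r ∧ x ≠ r ∧ ∃ ρ, ρ ∈ S ∧ ρ ∈ Branch T u r := by
    rcases hne_empty with ⟨ρ, hρ⟩ | ⟨ρ, hρ⟩
    · exact ⟨y, hyadj, fun e => hyx e.symm, ρ, hρ.1, hρ.2⟩
    · exact ⟨z, hzadj, fun e => hzx e.symm, ρ, hρ.1, hρ.2⟩
  have ht1L : t1 ∈ L' := ht1.1.1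
  have ht2L : t2 ∈ L' := ht2.1.1
  have ht3L : t3 ∈ L' := ht3.1.1
  have hρL : ρ ∈ L' := hρS.1
  have ht1b := ht1.2
  have ht2b := ht2.2
  have ht3b := ht3.2
  have h12 : t1 ≠ t2 := fun e => by rw [e] at o1; omega
  have h23 : t2 ≠ t3 := fun e => by rw [e] at o2; omega
  have h13 : t1 ≠ t3 := fun e => by rw [e] at o1; omega
  have hρx : ρ ∉ Branch T u x := fun h => hrx (Aux.branch_unique hT hadjx hradj h hρbr)
  have hρ1 : ρ ≠ t1 := fun e => hρx (e ▸ ht1b)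
  have hρ2 : ρ ≠ t2 := fun e => hρx (e ▸ ht2b)
  have hρ3 : ρ ≠ t3 := fun e => hρx (e ▸ ht3b)
  refine ⟨L' \ {t2}, ?_, ?_⟩
  · rw [Set.ssubset_iff_subset_ne]
    refine ⟨Set.diff_subset, fun h => ?_⟩
    have ht2' : t2 ∈ L' \ {t2} := h.symm ▸ ht2L
    exact ht2'.2 rfl
  · intro a b hab haL hbL
    have mem1 : t1 ∈ L' \ {t2} := ⟨ht1L, fun h => h12 h⟩
    have mem3 : t3 ∈ L' \ {t2} := ⟨ht3L, fun h => h23 (Set.mem_singleton_iff.mp h).symm⟩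
    have memρ : ρ ∈ L' \ {t2} := ⟨hρL, fun h => hρ2 h⟩
    have useKey : T.dist t2 a ≠ T.dist t2 b → HasTwoSeparators T (L' \ {t2}) a b := by
      intro hsepm
      rcases Aux.key hT huniq' hadjx hradj hrx ht1b ht2b ht3b hρbr o1 o2 hab hsepm with
        ⟨s1, s2⟩ | ⟨s1, s2⟩ | ⟨s1, s2⟩
      · exact ⟨t1, mem1, t3, mem3, h13, s1, s2⟩
      · exact ⟨t1, mem1, ρ, memρ, fun e => hρ1 e.symm, s1, s2⟩
      · exact ⟨t3, mem3, ρ, memρ, fun e => hρ3 e.symm, s1, s2⟩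
    by_cases haL' : a ∈ L'
    · have ha2 : a = t2 := by
        by_contra hne
        exact haL ⟨haL', fun h => hne h⟩
      subst ha2
      apply useKey
      have hb0 : T.dist a b ≠ 0 := fun h => hab (hconn.dist_eq_zero_iff.mp h)
      have ha0 : T.dist a a = 0 := SimpleGraph.dist_self
      omega
    · by_cases hbL' : b ∈ L'
      · have hb2 : b = t2 := by
          by_contra hne
          exact hbL ⟨hbL', fun h => hne h⟩
        subst hb2
        apply useKey
        have ha0 : T.dist b a ≠ 0 := fun h => hab (hconn.dist_eq_zero_iff.mp h).symm
        have hb0 : T.dist b b = 0 := SimpleGraph.dist_self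
        omega
      · obtain ⟨σ₁, hσ₁, σ₂, hσ₂, hσne, hsep₁, hsep₂⟩ := hL' a b hab haL' hbL'
        by_cases h1m : σ₁ = t2
        · exact useKey (h1m ▸ hsep₁)
        · by_cases h2m : σ₂ = t2
          · exact useKey (h2m ▸ hsep₂)
          · exact ⟨σ₁, ⟨hσ₁, h1m⟩, σ₂, ⟨hσ₂, h2m⟩, hσne, hsep₁, hsep₂⟩
end
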